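/- Let H be a Hermitian operator with eigenvalues E₀ < E₁ ≤ … where E₀ < 0 and E₁ < 0, gap lower bound Δ ≤ E₁ − E₀, ground eigenvector |E₀⟩, and |ψ₀⟩ a unit vector with γ := |⟨E₀|ψ₀⟩| > 0. Then for every k ∈ ℕ, 1 − |⟨E₀| H^k |ψ₀⟩| / ‖H^k|ψ₀⟩‖ ≤ ((1 − γ²)/(2γ²)) · (E₁/E₀)^{2k}. -/

import Mathlib

open Matrix

/-- Euclidean norm of a complex vector. -/
noncomputable def vecNorm {n : Type*} [Fintype n] (v : n → ℂ) : ℝ :=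
  Real.sqrt (star v ⬝ᵥ v).re

/-!
Write `ψ₀ = c v + r` with `c = ⟪v, ψ₀⟫` and `r ⊥ v`. Since `H` is self-adjoint and `v` is an
eigenvector, `H^k r` stays orthogonal to `v`, so `⟪v, H^k ψ₀⟫ = c E₀^k` and
`‖H^k ψ₀‖² = |c|² E₀^{2k} + ‖H^k r‖²`. The gap hypothesis makes the ground eigenspace the line
through `v`, so `r` only has components along eigenvectors with eigenvalue in `[E₁, 0)`, whence
`‖H^k r‖² ≤ E₁^{2k} (1 - |c|²)`. The bound then follows from `(1 + x)^{-1/2} ≥ 1 - x/2`.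
-/

open scoped InnerProductSpace

lemma one_sub_div_le_of_sq_le {n D x : ℝ} (hn : 0 < n) (hnD : n ≤ D)
    (h : D ^ 2 ≤ n ^ 2 * (1 + x)) : 1 - n / D ≤ x / 2 := by
  have hD : 0 < D := hn.trans_le hnD
  set t := n / D with ht
  have ht0 : 0 < t := div_pos hn hD
  have ht1 : t ≤ 1 := (div_le_one hD).mpr hnD
  have hsq : 1 ≤ t ^ 2 * (1 + x) := by
    rw [ht, div_pow, div_mul_eq_mul_div, le_div_iff₀ (by positivity)]
    linarith
  by_contra! hlt
  have : t ^ 2 * (1 + x) < t ^ 2 * (3 - 2 * t) := by gcongr; linarith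
  -- `1 - t ^ 2 * (3 - 2 * t) = (1 - t) ^ 2 * (1 + 2 * t)`
  nlinarith [mul_nonneg (sq_nonneg (1 - t)) (by linarith : (0:ℝ) ≤ 1 + 2 * t)]

section InnerProductSpace

variable {𝕜 E : Type*} [RCLike 𝕜] [NormedAddCommGroup E] [InnerProductSpace 𝕜 E]
  {T : E →ₗ[𝕜] E}

lemma eq_inner_smul_of_apply_eq_smul {a : 𝕜} {v : E} (hv : ‖v‖ = 1) (hTv : T v = a • v)
    (hsimple : ∀ w, T w = a • w → ⟪v, w⟫_𝕜 = 0 → w = 0) {w : E} (hw : T w = a • w) :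
    w = ⟪v, w⟫_𝕜 • v := by
  have hvv : ⟪v, v⟫_𝕜 = 1 := by simp [inner_self_eq_norm_sq_to_K, hv]
  refine sub_eq_zero.mp (hsimple _ ?_ ?_)
  · rw [map_sub, map_smul, hw, hTv, smul_sub, smul_comm]
  · rw [inner_sub_right, inner_smul_right, hvv, mul_one, sub_self]

namespace LinearMap.IsSymmetric

lemma eigenvalue_eq_of_inner_ne_zero (hT : T.IsSymmetric) {a b : ℝ} {v w : E}
    (hv : T v = (a : 𝕜) • v) (hw : T w = (b : 𝕜) • w) (hvw : ⟪v, w⟫_𝕜 ≠ 0) : b = a := by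
  have h := hT v w
  rw [hv, hw, inner_smul_left, inner_smul_right, RCLike.conj_ofReal] at h
  exact_mod_cast (mul_right_cancel₀ hvw h).symm

lemma sq_norm_pow_apply_le [FiniteDimensional 𝕜 E] (hT : T.IsSymmetric) {x : E} {B : ℝ}
    (hB : ∀ (μ : ℝ) (w : E), T w = (μ : 𝕜) • w → ⟪w, x⟫_𝕜 ≠ 0 → μ ^ 2 ≤ B) (k : ℕ) :
    ‖(T ^ k) x‖ ^ 2 ≤ B ^ k * ‖x‖ ^ 2 := by
  set b := hT.eigenvectorBasis rfl
  set μ := hT.eigenvalues rfl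
  have hcoeff : ∀ j, ⟪b j, (T ^ k) x⟫_𝕜 = (μ j : 𝕜) ^ k * ⟪b j, x⟫_𝕜 := fun j => by
    rw [← hT.pow k (b j) x, (hT.hasEigenvector_eigenvectorBasis rfl j).pow_apply k,
      inner_smul_left, ← RCLike.ofReal_pow, RCLike.conj_ofReal]
  rw [← b.sum_sq_norm_inner_right, ← b.sum_sq_norm_inner_right, Finset.mul_sum]
  refine Finset.sum_le_sum fun j _ => ?_
  rw [hcoeff, norm_mul, mul_pow, norm_pow, RCLike.norm_ofReal, ← pow_mul, mul_comm k,
    pow_mul, sq_abs]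
  by_cases hj : ⟪b j, x⟫_𝕜 = 0
  · simp [hj]
  · gcongr
    exact hB (μ j) (b j) (hT.apply_eigenvectorBasis rfl j) hj

variable {E₀ E₁ : ℝ} {v : E}

lemma sq_le_of_inner_ne_zero (hT : T.IsSymmetric) (hE₀₁ : E₀ < E₁) (hv : ‖v‖ = 1)
    (hTv : T v = (E₀ : 𝕜) • v)
    (hgap : ∀ (μ : ℝ) (w : E), w ≠ 0 → T w = (μ : 𝕜) • w → ⟪v, w⟫_𝕜 = 0 → E₁ ≤ μ ∧ μ < 0)
    {r : E} (hr : ⟪v, r⟫_𝕜 = 0) (μ : ℝ) (w : E) (hw : T w = (μ : 𝕜) • w)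
    (hwr : ⟪w, r⟫_𝕜 ≠ 0) : μ ^ 2 ≤ E₁ ^ 2 := by
  by_cases hvw : ⟪v, w⟫_𝕜 = 0
  · have hw0 : w ≠ 0 := by rintro rfl; simp at hwr
    obtain ⟨hE₁μ, hμ⟩ := hgap μ w hw0 hw hvw
    nlinarith
  · obtain rfl : μ = E₀ := hT.eigenvalue_eq_of_inner_ne_zero hTv hw hvw
    have hsimple : ∀ w, T w = (μ : 𝕜) • w → ⟪v, w⟫_𝕜 = 0 → w = 0 := fun w hw hvw => by
      by_contra hw0
      linarith [(hgap μ w hw0 hw hvw).1]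
    rw [eq_inner_smul_of_apply_eq_smul hv hTv hsimple hw, inner_smul_left, hr, mul_zero]
      at hwr
    exact absurd rfl hwr

theorem one_sub_norm_inner_pow_div_le [FiniteDimensional 𝕜 E] (hT : T.IsSymmetric)
    (hE₀ : E₀ ≠ 0) (hE₀₁ : E₀ < E₁) (hv : ‖v‖ = 1) (hTv : T v = (E₀ : 𝕜) • v)
    (hgap : ∀ (μ : ℝ) (w : E), w ≠ 0 → T w = (μ : 𝕜) • w → ⟪v, w⟫_𝕜 = 0 → E₁ ≤ μ ∧ μ < 0)
    {ψ : E} (hψ : ‖ψ‖ = 1) (hvψ : ⟪v, ψ⟫_𝕜 ≠ 0) (k : ℕ) :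
    1 - ‖⟪v, (T ^ k) ψ⟫_𝕜‖ / ‖(T ^ k) ψ‖
      ≤ (1 - ‖⟪v, ψ⟫_𝕜‖ ^ 2) / (2 * ‖⟪v, ψ⟫_𝕜‖ ^ 2) * (E₁ / E₀) ^ (2 * k) := by
  set c := ⟪v, ψ⟫_𝕜
  set r := ψ - c • v
  have hvv : ⟪v, v⟫_𝕜 = 1 := by simp [inner_self_eq_norm_sq_to_K, hv]
  have hvr : ⟪v, r⟫_𝕜 = 0 := by
    rw [inner_sub_right, inner_smul_right, hvv, mul_one, sub_self]
  have hψ_eq : ψ = c • v + r := (add_sub_cancel _ _).symm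
  have hTkv : (T ^ k) v = (E₀ : 𝕜) ^ k • v :=
    Module.End.HasEigenvector.pow_apply
      ⟨Module.End.mem_eigenspace_iff.mpr hTv, norm_ne_zero_iff.mp (by simp [hv])⟩ k
  have hvTkr : ⟪v, (T ^ k) r⟫_𝕜 = 0 := by
    rw [← hT.pow k, hTkv, inner_smul_left, hvr, mul_zero]
  have hTkψ : (T ^ k) ψ = (c * (E₀ : 𝕜) ^ k) • v + (T ^ k) r := by
    rw [hψ_eq, map_add, map_smul, hTkv, smul_smul]
  have hnum : ‖⟪v, (T ^ k) ψ⟫_𝕜‖ = ‖c‖ * |E₀| ^ k := by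
    rw [hTkψ, inner_add_right, inner_smul_right, hvv, hvTkr]
    simp
  have hpyth : ‖(T ^ k) ψ‖ ^ 2 = (‖c‖ * |E₀| ^ k) ^ 2 + ‖(T ^ k) r‖ ^ 2 := by
    rw [hTkψ, @norm_add_sq 𝕜, inner_smul_left, hvTkr]
    simp [norm_smul, hv]
  have hr : ‖r‖ ^ 2 = 1 - ‖c‖ ^ 2 := by
    have := congrArg (‖·‖ ^ 2) hψ_eq
    simp [@norm_add_sq 𝕜, inner_smul_left, hvr, hψ, norm_smul, hv] at this
    linarith
  have hTkr : ‖(T ^ k) r‖ ^ 2 ≤ (E₁ ^ 2) ^ k * (1 - ‖c‖ ^ 2) :=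
    hr ▸ hT.sq_norm_pow_apply_le (hT.sq_le_of_inner_ne_zero hE₀₁ hv hTv hgap hvr) k
  have hn : 0 < ‖c‖ * |E₀| ^ k := by positivity
  have hnD : ‖c‖ * |E₀| ^ k ≤ ‖(T ^ k) ψ‖ :=
    le_of_sq_le_sq (by rw [hpyth]; exact le_add_of_nonneg_right (sq_nonneg _)) (norm_nonneg _)
  rw [hnum]
  refine (one_sub_div_le_of_sq_le
    (x := (1 - ‖c‖ ^ 2) / ‖c‖ ^ 2 * (E₁ / E₀) ^ (2 * k)) hn hnD ?_).trans_eq (by ring)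
  calc ‖(T ^ k) ψ‖ ^ 2 ≤ (‖c‖ * |E₀| ^ k) ^ 2 + (E₁ ^ 2) ^ k * (1 - ‖c‖ ^ 2) := by
        rw [hpyth]; gcongr
    _ = _ := by
      rw [mul_pow, ← pow_mul, ← pow_mul, mul_comm k, pow_mul, pow_mul, sq_abs, div_pow]
      field_simp
      ring

end LinearMap.IsSymmetric

end InnerProductSpace

section Matrix

variable {n : Type*} [Fintype n]

lemma vecNorm_eq_norm (x : n → ℂ) : vecNorm x = ‖WithLp.toLp 2 x‖ := by
  rw [@norm_eq_sqrt_re_inner ℂ, EuclideanSpace.inner_eq_star_dotProduct, vecNorm,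
    dotProduct_comm]
  rfl

lemma star_dotProduct_eq_inner (x y : n → ℂ) :
    star x ⬝ᵥ y = ⟪WithLp.toLp 2 x, WithLp.toLp 2 y⟫_ℂ := by
  rw [EuclideanSpace.inner_eq_star_dotProduct, dotProduct_comm]

lemma toEuclideanLin_pow_apply [DecidableEq n] (H : Matrix n n ℂ) (k : ℕ) (x : n → ℂ) :
    (toEuclideanLin H ^ k) (WithLp.toLp 2 x) = WithLp.toLp 2 ((H ^ k) *ᵥ x) := by
  change (toLpLinAlgEquiv 2 H ^ k) _ = _
  rw [← map_pow]
  rfl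

end Matrix

theorem stmt_13_general {N : ℕ} (H : Matrix (Fin N) (Fin N) ℂ) (hH : H.IsHermitian)
    (E₀ E₁ γ : ℝ) (hE₀ : E₀ < 0) (hE₀₁ : E₀ < E₁)
    (v : Fin N → ℂ) (hv : vecNorm v = 1) (hEv : H.mulVec v = (E₀ : ℂ) • v)
    (hgap : ∀ (μ : ℝ) (w : Fin N → ℂ), w ≠ 0 → H.mulVec w = (μ : ℂ) • w →
      star v ⬝ᵥ w = 0 → E₁ ≤ μ ∧ μ < 0)
    (ψ₀ : Fin N → ℂ) (hψ₀ : vecNorm ψ₀ = 1)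
    (hγ : γ = ‖star v ⬝ᵥ ψ₀‖) (hγpos : 0 < γ) (k : ℕ) :
    1 - ‖star v ⬝ᵥ (H ^ k).mulVec ψ₀‖ / vecNorm ((H ^ k).mulVec ψ₀)
      ≤ ((1 - γ ^ 2) / (2 * γ ^ 2)) * (E₁ / E₀) ^ (2 * k) := by
  have hT : (toEuclideanLin H).IsSymmetric := isSymmetric_toEuclideanLin_iff.mpr hH
  have hgap' : ∀ (μ : ℝ) (w : EuclideanSpace ℂ (Fin N)), w ≠ 0 →
      toEuclideanLin H w = (μ : ℂ) • w → ⟪WithLp.toLp 2 v, w⟫_ℂ = 0 → E₁ ≤ μ ∧ μ < 0 :=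
    fun μ w hw hHw hvw => hgap μ w.ofLp (by simpa using hw) (congrArg WithLp.ofLp hHw)
      (by rwa [star_dotProduct_eq_inner])
  rw [vecNorm_eq_norm] at hv hψ₀
  rw [star_dotProduct_eq_inner] at hγ ⊢
  rw [vecNorm_eq_norm, ← toEuclideanLin_pow_apply, hγ]
  exact hT.one_sub_norm_inner_pow_div_le hE₀.ne hE₀₁ hv (congrArg (WithLp.toLp 2) hEv) hgap'
    hψ₀ (norm_pos_iff.mp (hγ ▸ hγpos)) k

/-- power method overlap bound: for Hermitian H with negative spectrum,
nondegenerate ground eigenvalue E₀ < E₁ < 0 (all non-ground eigenvalues lying in [E₁, 0)),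
ground eigenvector v and trial state ψ₀ with overlap γ > 0, one has for every k
1 − |⟨E₀|H^k|ψ₀⟩|/‖H^k ψ₀‖ ≤ ((1 − γ²)/(2γ²))·(E₁/E₀)^{2k}. -/
theorem stmt_13 {N : ℕ} (H : Matrix (Fin N) (Fin N) ℂ) (hH : H.IsHermitian)
    (E₀ E₁ γ : ℝ) (hE₀ : E₀ < 0) (hE₁ : E₁ < 0) (hE₀₁ : E₀ < E₁)
    (v : Fin N → ℂ) (hv : vecNorm v = 1) (hEv : H.mulVec v = (E₀ : ℂ) • v)
    (hgap : ∀ (μ : ℝ) (w : Fin N → ℂ), w ≠ 0 → H.mulVec w = (μ : ℂ) • w →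
      star v ⬝ᵥ w = 0 → E₁ ≤ μ ∧ μ < 0)
    (ψ₀ : Fin N → ℂ) (hψ₀ : vecNorm ψ₀ = 1)
    (hγ : γ = ‖star v ⬝ᵥ ψ₀‖) (hγpos : 0 < γ) (k : ℕ) :
    1 - ‖star v ⬝ᵥ (H ^ k).mulVec ψ₀‖ / vecNorm ((H ^ k).mulVec ψ₀)
      ≤ ((1 - γ ^ 2) / (2 * γ ^ 2)) * (E₁ / E₀) ^ (2 * k) :=
  stmt_13_general H hH E₀ E₁ γ hE₀ hE₀₁ v hv hEv hgap ψ₀ hψ₀ hγ hγpos k
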